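/- Let 𝐏 be a finite collection of quartiles, j ∈ {1,2,3}, and (a_{P_j})_{P∈𝐏} complex numbers. Then size_j((a_{P_j})_{P∈𝐏}) is comparable (up to absolute constants) to sup_T |I_T|^{−1} ‖(Σ_{P∈T} |a_{P_j}|² χ_{I_P}/|I_P|)^{1/2}‖_{L^{1,∞}(I_T)}, where T ranges over all trees in 𝐏 that are i-trees for some i ≠ j. -/

import Mathlib

open MeasureTheory Set

/-- The Walsh functions `w_l : ℝ → ℝ`, defined recursively by
`w_0 = χ_{[0,1)}`, `w_{2l}(x) = w_l(2x) + w_l(2x−1)`,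
`w_{2l+1}(x) = w_l(2x) − w_l(2x−1)`. -/
noncomputable def walsh : ℕ → ℝ → ℝ
  | 0, x => if x ∈ Set.Ico (0:ℝ) 1 then 1 else 0
  | (n+1), x =>
      if (n+1) % 2 = 0 then walsh ((n+1)/2) (2*x) + walsh ((n+1)/2) (2*x - 1)
      else walsh ((n+1)/2) (2*x) - walsh ((n+1)/2) (2*x - 1)
  decreasing_by all_goals exact Nat.div_lt_self (Nat.succ_pos n) one_lt_two

/-- A tile `[2^{-k}n, 2^{-k}(n+1)) × [2^k l, 2^k(l+1))`:
a half-open dyadic rectangle of area one. -/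
structure Tile where
  k : ℤ
  n : ℤ
  l : ℤ
deriving DecidableEq

namespace Tile

/-- The time interval `I_P = [2^{-k}n, 2^{-k}(n+1))` of a tile. -/
noncomputable def I (p : Tile) : Set ℝ := Set.Ico ((2:ℝ)^(-p.k) * p.n) ((2:ℝ)^(-p.k) * (p.n+1))

/-- The frequency interval `ω_P = [2^k l, 2^k(l+1))` of a tile. -/
noncomputable def freq (p : Tile) : Set ℝ := Set.Ico ((2:ℝ)^(p.k) * p.l) ((2:ℝ)^(p.k) * (p.l+1))

/-- The tile as a subset `I_P × ω_P` of the time-frequency plane. -/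
noncomputable def area (p : Tile) : Set (ℝ × ℝ) := p.I ×ˢ p.freq

/-- The length `|I_P| = 2^{-k}` of the time interval of a tile. -/
noncomputable def len (p : Tile) : ℝ := (2:ℝ)^(-p.k)

/-- The center `ξ_P` of the frequency interval of a tile. -/
noncomputable def ξ (p : Tile) : ℝ := (2:ℝ)^(p.k) * ((p.l : ℝ) + 1/2)

/-- The tile order: `p < q` iff `I_p ⊊ I_q` and `ω_q ⊆ ω_p`. -/
def lt (p q : Tile) : Prop := p.I ⊂ q.I ∧ q.freq ⊆ p.freq

/-- `p ≤ q` iff `p < q` or `p = q`. -/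
def le (p q : Tile) : Prop := Tile.lt p q ∨ p = q

/-- The Walsh wave packet `φ_P(x) = 2^{k/2} w_l(2^k x − n)` of a tile. -/
noncomputable def wp (p : Tile) : ℝ → ℝ :=
  fun x => Real.sqrt ((2:ℝ)^(p.k)) * walsh p.l.toNat ((2:ℝ)^(p.k) * x - p.n)

end Tile

/-- A quartile `[2^{-k}n, 2^{-k}(n+1)) × [2^{k+2}l, 2^{k+2}(l+1))`:
a dyadic rectangle of area four. -/
structure Quartile where
  k : ℤ
  n : ℤ
  l : ℤ
deriving DecidableEq

namespace Quartile

/-- The time interval `I_P` of a quartile. -/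
noncomputable def I (P : Quartile) : Set ℝ := Set.Ico ((2:ℝ)^(-P.k) * P.n) ((2:ℝ)^(-P.k) * (P.n+1))

/-- The length `|I_P| = 2^{-k}` of the time interval of a quartile. -/
noncomputable def len (P : Quartile) : ℝ := (2:ℝ)^(-P.k)

/-- The `j`-th sub-tile `P_j = I_P × [2^k(4l+j−1), 2^k(4l+j))` of a quartile,
for `j = 1, 2, 3`. -/
def tile (P : Quartile) (j : ℕ) : Tile := ⟨P.k, P.n, 4*P.l + ((j - 1 : ℕ) : ℤ)⟩

end Quartile

/-- `T` is an `i`-tree with top `top`: `P_i ≤ top_i` for all `P ∈ T`. -/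
def IsTree (i : ℕ) (top : Quartile) (T : Finset Quartile) : Prop :=
  ∀ P ∈ T, Tile.le (P.tile i) (top.tile i)

/-- `size_j((a_P)_{P∈Ps})`: the sup over trees `T ⊆ Ps` which are `i`-trees for
some `i ≠ j` of `(|I_T|⁻¹ Σ_{P∈T} |a_{P_j}|²)^{1/2}`. -/
noncomputable def size (Ps : Finset Quartile) (j : ℕ) (a : Quartile → ℂ) : ℝ :=
  sSup ((fun p : Quartile × Finset Quartile =>
      Real.sqrt ((∑ P ∈ p.2, ‖a P‖^2) / p.1.len)) ''
    {p | p.2 ⊆ Ps ∧ ∃ i ∈ ({1,2,3} : Set ℕ), i ≠ j ∧ IsTree i p.1 p.2})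

/-- `energy_j((a_P)_{P∈Ps})`: the sup over subsets `D ⊆ Ps` with
`{P_j : P ∈ D}` pairwise disjoint of `(Σ_{P∈D} |a_{P_j}|²)^{1/2}`. -/
noncomputable def energy (Ps : Finset Quartile) (j : ℕ) (a : Quartile → ℂ) : ℝ :=
  sSup ((fun D : Finset Quartile => Real.sqrt (∑ P ∈ D, ‖a P‖^2)) ''
    {D | D ⊆ Ps ∧ ∀ P ∈ D, ∀ P' ∈ D, P ≠ P' →
      Disjoint (P.tile j).area (P'.tile j).area})

/-- The `L^{1,∞}(I)` quasinorm `sup_{λ>0} λ |{x ∈ I : |g(x)| > λ}|`. -/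
noncomputable def weakL1 (g : ℝ → ℝ) (I : Set ℝ) : ℝ :=
  sSup {r | ∃ lam : ℝ, 0 < lam ∧ r = lam * (volume {x ∈ I | lam < |g x|}).toReal}

/-- The square function `(Σ_{P∈T} |a_{P_j}|² χ_{I_P}/|I_P|)^{1/2}` of a tree. -/
noncomputable def treeFn (T : Finset Quartile) (a : Quartile → ℂ) : ℝ → ℝ :=
  fun x => Real.sqrt (∑ P ∈ T, ‖a P‖^2 * (P.I.indicator (fun _ => (1:ℝ)) x) / P.len)


namespace JNaux

/-- dyadic interval -/
noncomputable def D (m n : ℤ) : Set ℝ := Set.Ico ((2:ℝ)^(-m) * n) ((2:ℝ)^(-m) * (n+1))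

lemma two_zpow_pos (m : ℤ) : (0:ℝ) < (2:ℝ)^m := zpow_pos (by norm_num) m

lemma two_zpow_mul (m m' : ℤ) : (2:ℝ)^m * (2:ℝ)^m' = (2:ℝ)^(m+m') :=
  (zpow_add₀ (by norm_num : (2:ℝ) ≠ 0) m m').symm

lemma mem_D {m n : ℤ} {x : ℝ} : x ∈ D m n ↔ (n:ℝ) ≤ (2:ℝ)^m * x ∧ (2:ℝ)^m * x < n+1 := by
  have h1 : (2:ℝ)^m * (2:ℝ)^(-m) = 1 := by rw [two_zpow_mul]; simp
  have hp := two_zpow_pos m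
  have hq := two_zpow_pos (-m)
  constructor
  · rintro ⟨ha, hb⟩
    constructor
    · calc (n:ℝ) = (2:ℝ)^m * ((2:ℝ)^(-m) * n) := by rw [← mul_assoc, h1, one_mul]
        _ ≤ (2:ℝ)^m * x := mul_le_mul_of_nonneg_left ha hp.le
    · calc (2:ℝ)^m * x < (2:ℝ)^m * ((2:ℝ)^(-m) * (n+1)) := mul_lt_mul_of_pos_left hb hp
        _ = (n:ℝ)+1 := by rw [← mul_assoc, h1, one_mul]
  · rintro ⟨ha, hb⟩
    have h2 : (2:ℝ)^(-m) * (2:ℝ)^m = 1 := by rw [two_zpow_mul]; simp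
    constructor
    · calc (2:ℝ)^(-m) * n ≤ (2:ℝ)^(-m) * ((2:ℝ)^m * x) := mul_le_mul_of_nonneg_left ha hq.le
        _ = x := by rw [← mul_assoc, h2, one_mul]
    · calc x = (2:ℝ)^(-m) * ((2:ℝ)^m * x) := by rw [← mul_assoc, h2, one_mul]
        _ < (2:ℝ)^(-m) * (n+1) := mul_lt_mul_of_pos_left hb hq

lemma mem_D_iff_floor {m n : ℤ} {x : ℝ} : x ∈ D m n ↔ n = ⌊(2:ℝ)^m * x⌋ := by
  rw [mem_D, eq_comm, Int.floor_eq_iff]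

lemma D_nonempty (m n : ℤ) : (D m n).Nonempty := by
  refine ⟨(2:ℝ)^(-m) * n, le_refl _, ?_⟩
  have := two_zpow_pos (-m)
  nlinarith

lemma D_eq_of_inter {m n n' : ℤ} (h : (D m n ∩ D m n').Nonempty) : n = n' := by
  obtain ⟨x, hx, hx'⟩ := h
  rw [mem_D_iff_floor] at hx hx'
  omega

lemma D_disjoint {m n n' : ℤ} (h : n ≠ n') : Disjoint (D m n) (D m n') := by
  rw [Set.disjoint_left]
  intro x hx hx'
  exact h (D_eq_of_inter ⟨x, hx, hx'⟩)

lemma cast_pow_two (e : ℕ) : (((2:ℤ)^e : ℤ) : ℝ) = (2:ℝ)^((e:ℤ)) := by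
  push_cast; rw [zpow_natCast]

lemma D_subset_of {m m' n n' : ℤ} (h : m ≤ m') (hx : (D m' n' ∩ D m n).Nonempty) :
    D m' n' ⊆ D m n := by
  obtain ⟨x, hx', hxm⟩ := hx
  rw [mem_D] at hx' hxm
  set c : ℤ := (2:ℤ)^((m'-m).toNat) with hc
  have hcpos : (0:ℤ) < c := pow_pos (by norm_num) _
  have hkey : (2:ℝ)^m' = (c:ℝ) * (2:ℝ)^m := by
    rw [hc, cast_pow_two, two_zpow_mul]
    congr 1; omega
  have hcr : (0:ℝ) < (c:ℝ) := by exact_mod_cast hcpos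
  have h1 : c * n ≤ n' := by
    have e0 : ((c:ℝ)) * n ≤ (2:ℝ)^m' * x := by
      calc ((c:ℝ)) * n ≤ (c:ℝ) * ((2:ℝ)^m * x) := mul_le_mul_of_nonneg_left hxm.1 hcr.le
        _ = (2:ℝ)^m' * x := by rw [hkey, mul_assoc]
    have : ((c * n : ℤ) : ℝ) < n' + 1 := by push_cast; linarith [hx'.2]
    have : (c * n : ℤ) < n' + 1 := by exact_mod_cast this
    omega
  have h2 : n' + 1 ≤ c * (n + 1) := by
    have e0 : (2:ℝ)^m' * x < (c:ℝ) * (n+1) := by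
      calc (2:ℝ)^m' * x = (c:ℝ) * ((2:ℝ)^m * x) := by rw [hkey, mul_assoc]
        _ < (c:ℝ) * (n+1) := mul_lt_mul_of_pos_left hxm.2 hcr
    have : ((n':ℝ)) < ((c * (n+1) : ℤ) : ℝ) := by push_cast; linarith [hx'.1]
    have : (n' : ℤ) < c * (n+1) := by exact_mod_cast this
    omega
  intro y hy
  rw [mem_D] at hy ⊢
  have hyy : ((c:ℝ) * n) ≤ (2:ℝ)^m' * y ∧ (2:ℝ)^m' * y < (c:ℝ)*(n+1) := by
    constructor
    · refine le_trans ?_ hy.1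
      have : ((c*n:ℤ):ℝ) ≤ ((n':ℤ):ℝ) := by exact_mod_cast h1
      push_cast at this; linarith
    · refine lt_of_lt_of_le hy.2 ?_
      have : ((n'+1:ℤ):ℝ) ≤ ((c*(n+1):ℤ):ℝ) := by exact_mod_cast h2
      push_cast at this; linarith
  rw [hkey] at hyy
  simp only [mul_assoc] at hyy
  constructor
  · exact (mul_le_mul_iff_right₀ hcr).mp hyy.1
  · exact (mul_lt_mul_iff_right₀ hcr).mp hyy.2

lemma D_subset_scale {m m' n n' : ℤ} (h : D m' n' ⊆ D m n) : m ≤ m' := by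
  have hlt : (2:ℝ)^(-m') * n' < (2:ℝ)^(-m') * (n'+1) := by
    have := two_zpow_pos (-m'); nlinarith
  rw [D, D, Set.Ico_subset_Ico_iff hlt] at h
  have hlen : (2:ℝ)^(-m') ≤ (2:ℝ)^(-m) := by nlinarith [h.1, h.2]
  have := (zpow_le_zpow_iff_right₀ (by norm_num : (1:ℝ) < 2)).mp hlen
  omega

lemma D_sub_iff {K k ν n : ℤ} (h : k ≤ K) :
    D K ν ⊆ D k n ↔ n * (2:ℤ)^((K-k).toNat) ≤ ν ∧ ν < (n+1) * (2:ℤ)^((K-k).toNat) := by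
  set c : ℤ := (2:ℤ)^((K-k).toNat) with hc
  have hcpos : (0:ℤ) < c := pow_pos (by norm_num) _
  have hcr : (0:ℝ) < (c:ℝ) := by exact_mod_cast hcpos
  have hkey : (2:ℝ)^(-k) = (c:ℝ) * (2:ℝ)^(-K) := by
    rw [hc, cast_pow_two, two_zpow_mul]; congr 1; omega
  have hKpos := two_zpow_pos (-K)
  constructor
  · intro hsub
    have hlt : (2:ℝ)^(-K) * ν < (2:ℝ)^(-K) * (ν+1) := by nlinarith
    rw [D, D, Set.Ico_subset_Ico_iff hlt] at hsub
    obtain ⟨ha, hb⟩ := hsub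
    rw [hkey] at ha hb
    have ha' : (2:ℝ)^(-K) * ((c:ℝ)*n) ≤ (2:ℝ)^(-K) * ν := by
      rw [show (2:ℝ)^(-K) * ((c:ℝ)*n) = (c:ℝ) * (2:ℝ)^(-K) * n from by ring]
      exact ha
    have hb' : (2:ℝ)^(-K) * ((ν:ℝ)+1) ≤ (2:ℝ)^(-K) * ((c:ℝ)*(n+1)) := by
      rw [show (2:ℝ)^(-K) * ((c:ℝ)*(n+1)) = (c:ℝ) * (2:ℝ)^(-K) * (n+1) from by ring]
      exact hb
    have g1 : (c:ℝ)*n ≤ (ν:ℝ) := (mul_le_mul_iff_right₀ hKpos).mp ha'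
    have g2 : ((ν:ℝ)+1) ≤ (c:ℝ)*(n+1) := (mul_le_mul_iff_right₀ hKpos).mp hb'
    constructor
    · have : ((n*c:ℤ):ℝ) ≤ ((ν:ℤ):ℝ) := by push_cast; linarith
      exact_mod_cast this
    · have : ((ν+1:ℤ):ℝ) ≤ (((n+1)*c:ℤ):ℝ) := by push_cast; linarith
      have h4 : (ν+1:ℤ) ≤ (n+1)*c := by exact_mod_cast this
      omega
  · rintro ⟨ha, hb⟩
    apply Set.Ico_subset_Ico
    · rw [hkey, mul_assoc]
      have : ((n*c:ℤ):ℝ) ≤ (ν:ℝ) := by exact_mod_cast ha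
      push_cast at this
      calc (c:ℝ) * ((2:ℝ)^(-K) * n) = (2:ℝ)^(-K) * (c * n) := by ring
        _ ≤ (2:ℝ)^(-K) * ν := by apply mul_le_mul_of_nonneg_left _ hKpos.le; linarith
    · rw [hkey, mul_assoc]
      have : ((ν+1:ℤ):ℝ) ≤ ((n+1)*c:ℤ) := by exact_mod_cast hb
      push_cast at this
      calc (2:ℝ)^(-K) * (ν+1) ≤ (2:ℝ)^(-K) * (c*(n+1)) := by
            apply mul_le_mul_of_nonneg_left _ hKpos.le; linarith
        _ = (c:ℝ) * ((2:ℝ)^(-K) * (n+1)) := by ring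

lemma D_fdiv_subset {m m' : ℤ} (q : ℤ) (h : m' ≤ m) :
    D m q ⊆ D m' (q / ((2:ℤ)^((m-m').toNat))) := by
  have hcpos : (0:ℤ) < (2:ℤ)^((m-m').toNat) := pow_pos (by norm_num) _
  rw [D_sub_iff h]
  exact ⟨Int.ediv_mul_le q hcpos.ne', Int.lt_ediv_add_one_mul_self q hcpos⟩

lemma vol_D (m n : ℤ) : MeasureTheory.volume (D m n) = ENNReal.ofReal ((2:ℝ)^(-m)) := by
  rw [D, Real.volume_Ico]
  congr 1; ring

end JNaux


namespace JNaux

lemma QI_eq (P : Quartile) : P.I = D P.k P.n := rfl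

lemma tile_I (P : Quartile) (i : ℕ) : (P.tile i).I = P.I := rfl

lemma tile_freq (P : Quartile) (i : ℕ) :
    (P.tile i).freq = D (-P.k) (4*P.l + ((i-1:ℕ):ℤ)) := by
  simp only [Tile.freq, Quartile.tile, D, neg_neg]

lemma len_eq (P : Quartile) : P.len = (2:ℝ)^(-P.k) := rfl

lemma len_pos (P : Quartile) : 0 < P.len := two_zpow_pos _

open Classical in
/-- `Hsum T a m q = Σ_{P ∈ T, D m q ⊆ I_P} |a_P|²/|I_P|`. -/
noncomputable def Hsum (T : Finset Quartile) (a : Quartile → ℂ) (m q : ℤ) : ℝ :=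
  ∑ P ∈ T.filter (fun P => D m q ⊆ P.I), ‖a P‖^2 / P.len

lemma Hsum_nonneg (T : Finset Quartile) (a : Quartile → ℂ) (m q : ℤ) : 0 ≤ Hsum T a m q := by
  apply Finset.sum_nonneg
  intro P _
  exact div_nonneg (by positivity) (len_pos P).le

lemma treeFn_nonneg (T : Finset Quartile) (a : Quartile → ℂ) (x : ℝ) : 0 ≤ treeFn T a x :=
  Real.sqrt_nonneg _

open Classical in
lemma treeFn_sq (T : Finset Quartile) (a : Quartile → ℂ) (x : ℝ) :
    treeFn T a x = Real.sqrt (∑ P ∈ T.filter (fun P => x ∈ P.I), ‖a P‖^2 / P.len) := by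
  unfold treeFn
  congr 1
  rw [Finset.sum_filter]
  apply Finset.sum_congr rfl
  intro P _
  by_cases hx : x ∈ P.I
  · simp [hx, Set.indicator_of_mem, mul_comm]
  · simp [hx, Set.indicator_of_notMem]

open Classical in
lemma treeFn_on {T : Finset Quartile} {a : Quartile → ℂ} {K ν : ℤ}
    (hK : ∀ P ∈ T, P.k ≤ K) {x : ℝ} (hx : x ∈ D K ν) :
    treeFn T a x = Real.sqrt (Hsum T a K ν) := by
  rw [treeFn_sq]
  congr 1
  apply Finset.sum_congr
  · ext P
    simp only [Finset.mem_filter, and_congr_right_iff]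
    intro hP
    constructor
    · intro hxP
      exact D_subset_of (hK P hP) ⟨x, hx, hxP⟩
    · intro hsub
      exact hsub hx
  · intros; rfl

lemma treeFn_ge {T : Finset Quartile} {a : Quartile → ℂ} {m q : ℤ} {x : ℝ}
    (hx : x ∈ D m q) : Real.sqrt (Hsum T a m q) ≤ treeFn T a x := by
  classical
  rw [treeFn_sq]
  apply Real.sqrt_le_sqrt
  apply Finset.sum_le_sum_of_subset_of_nonneg
  · intro P
    simp only [Finset.mem_filter, and_imp]
    intro hP hsub
    exact ⟨hP, hsub hx⟩
  · intro P _ _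
    exact div_nonneg (by positivity) (len_pos P).le

open Classical in
lemma filter_Ico_count {K k n : ℤ} (hkK : k ≤ K) (P : Quartile) (hPk : P.k ≤ K)
    (hPsub : P.I ⊆ D k n) :
    (Finset.Ico (n * 2^((K-k).toNat)) ((n+1) * 2^((K-k).toNat))).filter
      (fun ν => D K ν ⊆ P.I) =
    Finset.Ico (P.n * 2^((K-P.k).toNat)) ((P.n+1) * 2^((K-P.k).toNat)) := by
  ext ν
  simp only [Finset.mem_filter, Finset.mem_Ico, QI_eq, D_sub_iff hPk, D_sub_iff hkK]
  constructor
  · rintro ⟨-, h2⟩; exact h2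
  · intro h2
    refine ⟨?_, h2⟩
    exact (D_sub_iff hkK).mp (((D_sub_iff hPk).mpr h2).trans hPsub)

open Classical in
lemma filter_Ico_subset {K k n : ℤ} (P : Quartile) (hPk : P.k ≤ K) :
    (Finset.Ico (n * 2^((K-k).toNat)) ((n+1) * 2^((K-k).toNat))).filter
      (fun ν => D K ν ⊆ P.I) ⊆
    Finset.Ico (P.n * 2^((K-P.k).toNat)) ((P.n+1) * 2^((K-P.k).toNat)) := by
  intro ν
  simp only [Finset.mem_filter, Finset.mem_Ico, QI_eq, D_sub_iff hPk]
  rintro ⟨-, h2⟩; exact h2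

lemma card_Ico_pow (n : ℤ) (e : ℕ) :
    ((Finset.Ico (n * 2^e) ((n+1) * 2^e)).card : ℝ) = (2:ℝ)^((e:ℤ)) := by
  rw [Int.card_Ico]
  have h1 : (n+1) * 2^e - n * 2^e = 2^e := by ring
  rw [h1]
  have h2 : ((2:ℤ)^e).toNat = 2^e := by
    rw [show (2:ℤ)^e = ((2^e : ℕ) : ℤ) from by push_cast; ring, Int.toNat_natCast]
  rw [h2]
  push_cast
  rw [zpow_natCast]

lemma count_mul (P : Quartile) (K : ℤ) (hPk : P.k ≤ K) :
    (2:ℝ)^(-K) * (((Finset.Ico (P.n * 2^((K-P.k).toNat)) ((P.n+1) * 2^((K-P.k).toNat))).card : ℝ))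
      = P.len := by
  rw [card_Ico_pow, len_eq, two_zpow_mul]
  congr 1
  omega

open Classical in
lemma sum_swap_core (T : Finset Quartile) (a : Quartile → ℂ) (K k n : ℤ) :
    ∑ ν ∈ Finset.Ico (n * 2^((K-k).toNat)) ((n+1) * 2^((K-k).toNat)),
      (2:ℝ)^(-K) * Hsum T a K ν
    = ∑ P ∈ T, ((((Finset.Ico (n * 2^((K-k).toNat)) ((n+1) * 2^((K-k).toNat))).filter
        (fun ν => D K ν ⊆ P.I)).card : ℝ)) * ((2:ℝ)^(-K) * (‖a P‖^2 / P.len)) := by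
  set N := Finset.Ico (n * 2^((K-k).toNat)) ((n+1) * 2^((K-k).toNat)) with hN
  have : ∀ ν, (2:ℝ)^(-K) * Hsum T a K ν
      = ∑ P ∈ T, (if D K ν ⊆ P.I then (2:ℝ)^(-K) * (‖a P‖^2 / P.len) else 0) := by
    intro ν
    rw [Hsum, Finset.mul_sum, ← Finset.sum_filter]
  simp only [this]
  rw [Finset.sum_comm]
  apply Finset.sum_congr rfl
  intro P _
  rw [← Finset.sum_filter, Finset.sum_const, nsmul_eq_mul]

open Classical in
lemma sum_scaleK_eq {T : Finset Quartile} {a : Quartile → ℂ} {K k n : ℤ} (hkK : k ≤ K)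
    (hK : ∀ P ∈ T, P.k ≤ K) (hsub : ∀ P ∈ T, P.I ⊆ D k n) :
    ∑ ν ∈ Finset.Ico (n * 2^((K-k).toNat)) ((n+1) * 2^((K-k).toNat)),
      (2:ℝ)^(-K) * Hsum T a K ν = ∑ P ∈ T, ‖a P‖^2 := by
  rw [sum_swap_core]
  apply Finset.sum_congr rfl
  intro P hP
  rw [filter_Ico_count hkK P (hK P hP) (hsub P hP)]
  rw [show ∀ (c g : ℝ), c * ((2:ℝ)^(-K) * g) = ((2:ℝ)^(-K) * c) * g from fun c g => by ring]
  rw [count_mul P K (hK P hP)]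
  have hl := (len_pos P).ne'
  field_simp

open Classical in
lemma sum_scaleK_le {T : Finset Quartile} {a : Quartile → ℂ} {K k n : ℤ}
    (hK : ∀ P ∈ T, P.k ≤ K) :
    ∑ ν ∈ Finset.Ico (n * 2^((K-k).toNat)) ((n+1) * 2^((K-k).toNat)),
      (2:ℝ)^(-K) * Hsum T a K ν ≤ ∑ P ∈ T, ‖a P‖^2 := by
  rw [sum_swap_core]
  apply Finset.sum_le_sum
  intro P hP
  have hcard : ((((Finset.Ico (n * 2^((K-k).toNat)) ((n+1) * 2^((K-k).toNat))).filter
      (fun ν => D K ν ⊆ P.I)).card : ℝ))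
      ≤ (((Finset.Ico (P.n * 2^((K-P.k).toNat)) ((P.n+1) * 2^((K-P.k).toNat))).card : ℝ)) := by
    exact_mod_cast Finset.card_le_card (filter_Ico_subset P (hK P hP))
  have hg : 0 ≤ (2:ℝ)^(-K) * (‖a P‖^2 / P.len) :=
    mul_nonneg (two_zpow_pos _).le (div_nonneg (by positivity) (len_pos P).le)
  calc _ ≤ (((Finset.Ico (P.n * 2^((K-P.k).toNat)) ((P.n+1) * 2^((K-P.k).toNat))).card : ℝ))
        * ((2:ℝ)^(-K) * (‖a P‖^2 / P.len)) := mul_le_mul_of_nonneg_right hcard hg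
    _ = ((2:ℝ)^(-K) * (((Finset.Ico (P.n * 2^((K-P.k).toNat)) ((P.n+1) * 2^((K-P.k).toNat))).card : ℝ))) * (‖a P‖^2 / P.len) := by ring
    _ = P.len * (‖a P‖^2 / P.len) := by rw [count_mul P K (hK P hP)]
    _ = ‖a P‖^2 := by
        have hl := (len_pos P).ne'
        field_simp

end JNaux



namespace JNaux

/-- index set of admissible (top, tree) pairs -/
def idx (Ps : Finset Quartile) (j : ℕ) : Set (Quartile × Finset Quartile) :=
  {p | p.2 ⊆ Ps ∧ ∃ i ∈ ({1,2,3} : Set ℕ), i ≠ j ∧ IsTree i p.1 p.2}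

noncomputable def sizeSet (Ps : Finset Quartile) (j : ℕ) (a : Quartile → ℂ) : Set ℝ :=
  (fun p : Quartile × Finset Quartile =>
      Real.sqrt ((∑ P ∈ p.2, ‖a P‖^2) / p.1.len)) '' idx Ps j

noncomputable def wSet (Ps : Finset Quartile) (j : ℕ) (a : Quartile → ℂ) : Set ℝ :=
  (fun p : Quartile × Finset Quartile =>
      weakL1 (treeFn p.2 a) p.1.I / p.1.len) '' idx Ps j

lemma size_eq_sSup (Ps : Finset Quartile) (j : ℕ) (a : Quartile → ℂ) :
    size Ps j a = sSup (sizeSet Ps j a) := rfl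

lemma tree_sub {i : ℕ} {top : Quartile} {T : Finset Quartile} (ht : IsTree i top T)
    {P : Quartile} (hP : P ∈ T) :
    P.I ⊆ top.I ∧ top.k ≤ P.k ∧ (top.tile i).freq ⊆ (P.tile i).freq := by
  rcases ht P hP with h | h
  · obtain ⟨hI, hfreq⟩ := h
    rw [tile_I, tile_I] at hI
    refine ⟨hI.subset, ?_, hfreq⟩
    rw [QI_eq, QI_eq] at hI
    exact D_subset_scale hI.subset
  · have h' := h
    simp only [Quartile.tile, Tile.mk.injEq] at h'
    obtain ⟨hk, hn, -⟩ := h'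
    refine ⟨?_, le_of_eq hk.symm, ?_⟩
    · rw [QI_eq, QI_eq, hk, hn]
    · rw [h]

/-- The scale `K`: finer than everything in the tree and the top. -/
noncomputable def bigK (top : Quartile) (T : Finset Quartile) : ℤ :=
  (insert top T).sup' ⟨top, Finset.mem_insert_self _ _⟩ Quartile.k

lemma bigK_top (top : Quartile) (T : Finset Quartile) : top.k ≤ bigK top T :=
  Finset.le_sup' Quartile.k (Finset.mem_insert_self _ _)

lemma bigK_mem (top : Quartile) {T : Finset Quartile} {P : Quartile} (hP : P ∈ T) :
    P.k ≤ bigK top T :=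
  Finset.le_sup' Quartile.k (Finset.mem_insert_of_mem hP)

open Classical in
lemma muset_eq {top : Quartile} {T : Finset Quartile} {a : Quartile → ℂ} {K : ℤ}
    (hk0K : top.k ≤ K) (hK : ∀ P ∈ T, P.k ≤ K) {lam : ℝ} (hlam : 0 < lam) :
    volume {x ∈ top.I | lam < |treeFn T a x|}
      = (((Finset.Ico (top.n * 2^((K - top.k).toNat))
            ((top.n+1) * 2^((K - top.k).toNat))).filter
          (fun ν => lam^2 < Hsum T a K ν)).card : ENNReal)
        * ENNReal.ofReal ((2:ℝ)^(-K)) := by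
  set E := (Finset.Ico (top.n * 2^((K - top.k).toNat))
      ((top.n+1) * 2^((K - top.k).toNat))).filter
      (fun ν => lam^2 < Hsum T a K ν) with hE
  have hset : {x ∈ top.I | lam < |treeFn T a x|} = ⋃ ν ∈ E, D K ν := by
    ext x
    simp only [Set.mem_sep_iff, Set.mem_iUnion, exists_prop]
    constructor
    · rintro ⟨hx, hlx⟩
      refine ⟨⌊(2:ℝ)^K * x⌋, ?_, mem_D_iff_floor.mpr rfl⟩
      have hxD : x ∈ D K ⌊(2:ℝ)^K * x⌋ := mem_D_iff_floor.mpr rfl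
      have hNmem : D K ⌊(2:ℝ)^K * x⌋ ⊆ D top.k top.n :=
        D_subset_of hk0K ⟨x, hxD, hx⟩
      rw [hE, Finset.mem_filter, Finset.mem_Ico]
      refine ⟨(D_sub_iff hk0K).mp hNmem, ?_⟩
      rw [abs_of_nonneg (treeFn_nonneg T a x), treeFn_on hK hxD] at hlx
      exact (Real.lt_sqrt hlam.le).mp hlx
    · rintro ⟨ν, hν, hxD⟩
      rw [hE, Finset.mem_filter, Finset.mem_Ico] at hν
      refine ⟨(D_sub_iff hk0K).mpr hν.1 hxD, ?_⟩
      rw [abs_of_nonneg (treeFn_nonneg T a x), treeFn_on hK hxD]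
      exact (Real.lt_sqrt hlam.le).mpr hν.2
  have hdis : (↑E : Set ℤ).PairwiseDisjoint (fun ν => D K ν) :=
    fun ν _ ν' _ hne => D_disjoint hne
  rw [hset, measure_biUnion_finset hdis (fun ν _ => measurableSet_Ico)]
  rw [Finset.sum_congr rfl (fun ν _ => vol_D K ν), Finset.sum_const, nsmul_eq_mul]

open Classical in
lemma weakL1_elem_le {top : Quartile} {T : Finset Quartile} {a : Quartile → ℂ}
    {lam : ℝ} (hlam : 0 < lam) :
    lam * (volume {x ∈ top.I | lam < |treeFn T a x|}).toReal
      ≤ Real.sqrt ((∑ P ∈ T, ‖a P‖^2) * top.len) := by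
  set K := bigK top T with hKdef
  have hk0K : top.k ≤ K := bigK_top top T
  have hK : ∀ P ∈ T, P.k ≤ K := fun P hP => bigK_mem top hP
  set N := Finset.Ico (top.n * 2^((K - top.k).toNat))
      ((top.n+1) * 2^((K - top.k).toNat)) with hN
  set E := N.filter (fun ν => lam^2 < Hsum T a K ν) with hE
  have hvol : (volume {x ∈ top.I | lam < |treeFn T a x|}).toReal
      = (E.card : ℝ) * (2:ℝ)^(-K) := by
    rw [muset_eq hk0K hK hlam]
    rw [ENNReal.toReal_mul, ENNReal.toReal_natCast,
      ENNReal.toReal_ofReal (two_zpow_pos (-K)).le]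
  rw [hvol]
  have hA0 : 0 ≤ ∑ P ∈ T, ‖a P‖^2 := Finset.sum_nonneg fun P _ => by positivity
  have hL0 : 0 < top.len := len_pos top
  have hr0 : 0 ≤ lam * ((E.card : ℝ) * (2:ℝ)^(-K)) := by
    have := two_zpow_pos (-K)
    positivity
  have h1 : lam^2 * ((E.card : ℝ) * (2:ℝ)^(-K)) ≤ ∑ P ∈ T, ‖a P‖^2 := by
    have e1 : lam^2 * ((E.card : ℝ) * (2:ℝ)^(-K)) = ∑ _ν ∈ E, lam^2 * (2:ℝ)^(-K) := by
      rw [Finset.sum_const, nsmul_eq_mul]; ring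
    rw [e1]
    calc ∑ ν ∈ E, lam^2 * (2:ℝ)^(-K) ≤ ∑ ν ∈ E, (2:ℝ)^(-K) * Hsum T a K ν := by
          apply Finset.sum_le_sum
          intro ν hν
          rw [hE, Finset.mem_filter] at hν
          have := two_zpow_pos (-K)
          nlinarith [hν.2]
      _ ≤ ∑ ν ∈ N, (2:ℝ)^(-K) * Hsum T a K ν := by
          apply Finset.sum_le_sum_of_subset_of_nonneg (Finset.filter_subset _ _)
          intro ν _ _
          exact mul_nonneg (two_zpow_pos _).le (Hsum_nonneg T a K ν)
      _ ≤ ∑ P ∈ T, ‖a P‖^2 := sum_scaleK_le hK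
  have h2 : (E.card : ℝ) * (2:ℝ)^(-K) ≤ top.len := by
    have hcard : (E.card : ℝ) ≤ (N.card : ℝ) :=
      mod_cast Finset.card_le_card (Finset.filter_subset _ _)
    have hNc : (2:ℝ)^(-K) * (N.card : ℝ) = top.len := count_mul top K hk0K
    nlinarith [two_zpow_pos (-K)]
  have hsq : (lam * ((E.card : ℝ) * (2:ℝ)^(-K)))^2 ≤ (∑ P ∈ T, ‖a P‖^2) * top.len := by
    have expand : (lam * ((E.card : ℝ) * (2:ℝ)^(-K)))^2
        = (lam^2 * ((E.card : ℝ) * (2:ℝ)^(-K))) * ((E.card : ℝ) * (2:ℝ)^(-K)) := by ring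
    rw [expand]
    have hEnn : (0:ℝ) ≤ (E.card : ℝ) * (2:ℝ)^(-K) := by
      have := two_zpow_pos (-K); positivity
    exact mul_le_mul h1 h2 hEnn hA0
  calc lam * ((E.card : ℝ) * (2:ℝ)^(-K))
      = Real.sqrt ((lam * ((E.card : ℝ) * (2:ℝ)^(-K)))^2) := (Real.sqrt_sq hr0).symm
    _ ≤ Real.sqrt ((∑ P ∈ T, ‖a P‖^2) * top.len) := Real.sqrt_le_sqrt hsq

lemma weakL1_bddAbove (top : Quartile) (T : Finset Quartile) (a : Quartile → ℂ) :
    ∀ r ∈ {r | ∃ lam : ℝ, 0 < lam ∧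
        r = lam * (volume {x ∈ top.I | lam < |treeFn T a x|}).toReal},
      r ≤ Real.sqrt ((∑ P ∈ T, ‖a P‖^2) * top.len) := by
  rintro r ⟨lam, hlam, rfl⟩
  exact weakL1_elem_le hlam

lemma weakL1_le (top : Quartile) (T : Finset Quartile) (a : Quartile → ℂ) :
    weakL1 (treeFn T a) top.I ≤ Real.sqrt ((∑ P ∈ T, ‖a P‖^2) * top.len) :=
  Real.sSup_le (weakL1_bddAbove top T a) (Real.sqrt_nonneg _)

lemma weakL1_ge (top : Quartile) (T : Finset Quartile) (a : Quartile → ℂ)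
    {lam : ℝ} (hlam : 0 < lam) :
    lam * (volume {x ∈ top.I | lam < |treeFn T a x|}).toReal ≤ weakL1 (treeFn T a) top.I :=
  le_csSup ⟨_, weakL1_bddAbove top T a⟩ ⟨lam, hlam, rfl⟩

lemma sizeSet_elem_le {Ps : Finset Quartile} {j : ℕ} {a : Quartile → ℂ} :
    ∀ e ∈ sizeSet Ps j a, e ≤ Real.sqrt (∑ P ∈ Ps, ‖a P‖^2 / P.len) := by
  rintro e ⟨⟨top, T⟩, ⟨hsub, i, hi, hij, htree⟩, rfl⟩
  dsimp only
  apply Real.sqrt_le_sqrt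
  have hL0 : 0 < top.len := len_pos top
  calc (∑ P ∈ T, ‖a P‖^2) / top.len = ∑ P ∈ T, ‖a P‖^2 / top.len := Finset.sum_div ..
    _ ≤ ∑ P ∈ T, ‖a P‖^2 / P.len := by
        apply Finset.sum_le_sum
        intro P hP
        obtain ⟨-, hk, -⟩ := tree_sub htree hP
        have hlen : P.len ≤ top.len := by
          rw [len_eq, len_eq]
          exact (zpow_le_zpow_iff_right₀ (by norm_num : (1:ℝ) < 2)).mpr (neg_le_neg hk)
        exact div_le_div_of_nonneg_left (by positivity) (len_pos P) hlen
    _ ≤ ∑ P ∈ Ps, ‖a P‖^2 / P.len := by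
        apply Finset.sum_le_sum_of_subset_of_nonneg hsub
        intro P _ _
        exact div_nonneg (by positivity) (len_pos P).le

lemma sizeSet_bddAbove (Ps : Finset Quartile) (j : ℕ) (a : Quartile → ℂ) :
    BddAbove (sizeSet Ps j a) :=
  ⟨_, sizeSet_elem_le⟩

lemma witness_i (j : ℕ) : ∃ i, i ∈ ({1,2,3} : Set ℕ) ∧ i ≠ j := by
  by_cases h : j = 1
  · exact ⟨2, by simp, by omega⟩
  · exact ⟨1, by simp, by omega⟩

lemma zero_mem_idx (Ps : Finset Quartile) (j : ℕ) :
    ((⟨0,0,0⟩ : Quartile), (∅ : Finset Quartile)) ∈ idx Ps j := by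
  obtain ⟨i, hi, hij⟩ := witness_i j
  exact ⟨Finset.empty_subset _, i, hi, hij, fun P hP => absurd hP (Finset.notMem_empty P)⟩

lemma size_nonneg (Ps : Finset Quartile) (j : ℕ) (a : Quartile → ℂ) :
    0 ≤ size Ps j a := by
  rw [size_eq_sSup]
  have h0 : (0:ℝ) ∈ sizeSet Ps j a := by
    refine ⟨_, zero_mem_idx Ps j, ?_⟩
    simp
  exact le_csSup (sizeSet_bddAbove Ps j a) h0

lemma le_size {Ps : Finset Quartile} {j : ℕ} {a : Quartile → ℂ}
    {top : Quartile} {T : Finset Quartile} (h : (top, T) ∈ idx Ps j) :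
    Real.sqrt ((∑ P ∈ T, ‖a P‖^2) / top.len) ≤ size Ps j a := by
  rw [size_eq_sSup]
  exact le_csSup (sizeSet_bddAbove Ps j a) ⟨(top, T), h, rfl⟩

lemma sum_le_size_sq {Ps : Finset Quartile} {j : ℕ} {a : Quartile → ℂ}
    {top : Quartile} {T : Finset Quartile} (h : (top, T) ∈ idx Ps j) :
    (∑ P ∈ T, ‖a P‖^2) ≤ (size Ps j a)^2 * top.len := by
  have hs := le_size (a := a) h
  have hL0 : 0 < top.len := len_pos top
  have hA0 : 0 ≤ (∑ P ∈ T, ‖a P‖^2) := Finset.sum_nonneg fun P _ => by positivity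
  have hdiv : (∑ P ∈ T, ‖a P‖^2) / top.len ≤ (size Ps j a)^2 := by
    have h1 : (∑ P ∈ T, ‖a P‖^2) / top.len = (Real.sqrt ((∑ P ∈ T, ‖a P‖^2) / top.len))^2 :=
      (Real.sq_sqrt (by positivity)).symm
    rw [h1]
    exact pow_le_pow_left₀ (Real.sqrt_nonneg _) hs 2
  calc (∑ P ∈ T, ‖a P‖^2) = ((∑ P ∈ T, ‖a P‖^2) / top.len) * top.len := by
        field_simp
    _ ≤ (size Ps j a)^2 * top.len := mul_le_mul_of_nonneg_right hdiv hL0.le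

lemma sqrt_mul_div (A L : ℝ) (hA : 0 ≤ A) (hL : 0 < L) :
    Real.sqrt (A * L) / L = Real.sqrt (A / L) := by
  rw [Real.sqrt_mul hA, Real.sqrt_div hA]
  have hsL : 0 < Real.sqrt L := Real.sqrt_pos.mpr hL
  rw [show Real.sqrt A * Real.sqrt L / L = Real.sqrt A * (Real.sqrt L / L) from by ring]
  congr 1
  rw [show L = Real.sqrt L * Real.sqrt L from (Real.mul_self_sqrt hL.le).symm]
  field_simp
  rw [Real.sqrt_sq hsL.le]

lemma wSet_elem_le_size {Ps : Finset Quartile} {j : ℕ} {a : Quartile → ℂ} :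
    ∀ r ∈ wSet Ps j a, r ≤ size Ps j a := by
  rintro r ⟨⟨top, T⟩, hmem, rfl⟩
  dsimp only
  have hA0 : 0 ≤ (∑ P ∈ T, ‖a P‖^2) := Finset.sum_nonneg fun P _ => by positivity
  have hL0 : 0 < top.len := len_pos top
  calc weakL1 (treeFn T a) top.I / top.len
      ≤ Real.sqrt ((∑ P ∈ T, ‖a P‖^2) * top.len) / top.len := by
        rw [div_eq_mul_inv, div_eq_mul_inv]
        exact mul_le_mul_of_nonneg_right (weakL1_le top T a) (inv_nonneg.mpr hL0.le)
    _ = Real.sqrt ((∑ P ∈ T, ‖a P‖^2) / top.len) := sqrt_mul_div _ _ hA0 hL0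
    _ ≤ size Ps j a := le_size hmem

lemma wSet_bddAbove (Ps : Finset Quartile) (j : ℕ) (a : Quartile → ℂ) :
    BddAbove (wSet Ps j a) :=
  ⟨_, wSet_elem_le_size⟩

lemma wSet_sSup_le_size (Ps : Finset Quartile) (j : ℕ) (a : Quartile → ℂ) :
    sSup (wSet Ps j a) ≤ size Ps j a :=
  Real.sSup_le wSet_elem_le_size (size_nonneg Ps j a)

lemma treeFn_empty (a : Quartile → ℂ) (x : ℝ) : treeFn ∅ a x = 0 := by
  unfold treeFn
  simp

lemma weakL1_empty (a : Quartile → ℂ) (I : Set ℝ) : weakL1 (treeFn ∅ a) I = 0 := by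
  unfold weakL1
  have : {r | ∃ lam : ℝ, 0 < lam ∧
      r = lam * (volume {x ∈ I | lam < |treeFn ∅ a x|}).toReal} = {0} := by
    ext r
    simp only [Set.mem_setOf_eq, Set.mem_singleton_iff]
    constructor
    · rintro ⟨lam, hlam, rfl⟩
      have : {x ∈ I | lam < |treeFn ∅ a x|} = ∅ := by
        ext x
        simp [treeFn_empty, abs_of_nonneg, hlam.le, not_lt.mpr hlam.le]
      rw [this]
      simp
    · intro h
      refine ⟨1, one_pos, ?_⟩
      have : {x ∈ I | (1:ℝ) < |treeFn ∅ a x|} = ∅ := by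
        ext x
        simp [treeFn_empty]
      rw [h, this]
      simp
  rw [this, csSup_singleton]

lemma wSet_nonneg (Ps : Finset Quartile) (j : ℕ) (a : Quartile → ℂ) :
    0 ≤ sSup (wSet Ps j a) := by
  have h0 : (0:ℝ) ∈ wSet Ps j a := by
    refine ⟨_, zero_mem_idx Ps j, ?_⟩
    dsimp only
    rw [weakL1_empty]
    simp
  exact le_csSup (wSet_bddAbove Ps j a) h0

end JNaux


namespace JNaux

open Classical in
lemma subtree_bound {Ps : Finset Quartile} {j i : ℕ} {a : Quartile → ℂ}
    {top : Quartile} {T : Finset Quartile} (hsub : T ⊆ Ps)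
    (hi : i ∈ ({1,2,3} : Set ℕ)) (hij : i ≠ j) (htree : IsTree i top T)
    (m q : ℤ) :
    ∑ P ∈ T.filter (fun P => P.I ⊆ D m q), ‖a P‖^2
      ≤ (size Ps j a)^2 * (4 * (2:ℝ)^(-m)) := by
  set T' := T.filter (fun P => P.I ⊆ D m q) with hT'
  rcases T'.eq_empty_or_nonempty with he | hne
  · rw [he, Finset.sum_empty]
    have h2m := two_zpow_pos (-m)
    positivity
  · obtain ⟨Pstar, hPs, hPk⟩ := Finset.exists_mem_eq_inf' hne Quartile.k
    have hPsT : Pstar ∈ T := Finset.mem_of_mem_filter _ hPs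
    have hPsub : Pstar.I ⊆ D m q := (Finset.mem_filter.mp hPs).2
    have hmk : m ≤ Pstar.k := by
      rw [QI_eq] at hPsub
      exact D_subset_scale hPsub
    have hkmin_le : ∀ P ∈ T', Pstar.k ≤ P.k := by
      intro P hP
      rw [← hPk]
      exact Finset.inf'_le _ hP
    set d : ℤ := ((i-1 : ℕ) : ℤ) with hd
    set e : ℕ := (Pstar.k - (m-2)).toNat with he2
    have hee : 2 ≤ e := by omega
    have hc4 : (4:ℤ) ≤ 2^e := by
      calc (4:ℤ) = 2^2 := by norm_num
        _ ≤ 2^e := pow_le_pow_right₀ (by norm_num) hee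
    set aI : ℤ := (4*Pstar.l + d) * 2^e with haI
    set l' : ℤ := -((d - aI) / 4) with hl'
    set t : ℤ := 4*l' + d with ht
    have h4 : t = aI + (d - aI) % 4 := by
      rw [ht, hl', Int.emod_def]; ring
    have htb1 : aI ≤ t := by
      have := Int.emod_nonneg (d - aI) (by norm_num : (4:ℤ) ≠ 0)
      omega
    have htb2 : t < aI + 4 := by
      have := Int.emod_lt_of_pos (d - aI) (by norm_num : (0:ℤ) < 4)
      omega
    set Q' : Quartile := ⟨m-2, q / 4, l'⟩ with hQ'
    have hQk : Q'.k = m - 2 := rfl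
    have hQl : Q'.l = l' := rfl
    have hIQ : D m q ⊆ Q'.I := by
      rw [QI_eq]
      have hdd := D_fdiv_subset q (show m-2 ≤ m by omega)
      have h2 : ((m-(m-2)).toNat) = 2 := by omega
      rw [h2] at hdd
      norm_num at hdd
      exact hdd
    have homega : ∀ P ∈ T, (top.tile i).freq ⊆ (P.tile i).freq :=
      fun P hP => (tree_sub htree hP).2.2
    obtain ⟨x0, hx0⟩ : ((top.tile i).freq).Nonempty := by
      rw [tile_freq]
      exact D_nonempty _ _
    have hfrPstar : (Q'.tile i).freq ⊆ (Pstar.tile i).freq := by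
      simp only [tile_freq, hQk, hQl]
      have hsc : -Pstar.k ≤ -(m-2) := by omega
      rw [D_sub_iff hsc]
      have hexp : ((-(m-2)) - (-Pstar.k)).toNat = e := by omega
      rw [hexp]
      constructor
      · exact htb1
      · have hrr : (4*Pstar.l + d + 1) * 2^e = aI + 2^e := by rw [haI]; ring
        rw [hrr]
        omega
    have hfr : ∀ P ∈ T', (Q'.tile i).freq ⊆ (P.tile i).freq := by
      intro P hP
      have hPT : P ∈ T := Finset.mem_of_mem_filter _ hP
      refine hfrPstar.trans ?_
      have h1 := homega Pstar hPsT hx0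
      have h2 := homega P hPT hx0
      simp only [tile_freq] at h1 h2 ⊢
      exact D_subset_of (show -P.k ≤ -Pstar.k by
        have := hkmin_le P hP; omega) ⟨x0, h1, h2⟩
    have hidx : (Q', T') ∈ idx Ps j := by
      refine ⟨(Finset.filter_subset _ _).trans hsub, i, hi, hij, ?_⟩
      intro P hP
      left
      constructor
      · rw [tile_I, tile_I]
        have hPQ : P.I ⊆ Q'.I := ((Finset.mem_filter.mp hP).2).trans hIQ
        refine HasSubset.Subset.ssubset_of_ne hPQ ?_
        intro heq
        have hsup : Q'.I ⊆ P.I := heq ▸ subset_rfl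
        rw [QI_eq, QI_eq] at hsup
        have h5 := D_subset_scale hsup
        have h6 := hkmin_le P hP
        rw [hQk] at h5
        omega
      · exact hfr P hP
    have hfin := sum_le_size_sq (a := a) hidx
    have hlen : Q'.len = 4 * (2:ℝ)^(-m) := by
      rw [len_eq, hQk]
      rw [show -(m-2) = 2 + -m by ring, ← two_zpow_mul]
      norm_num
    rw [hlen] at hfin
    exact hfin

end JNaux


namespace JNaux

open Classical in
lemma key_estimate {Ps : Finset Quartile} {j : ℕ} {a : Quartile → ℂ}
    {top : Quartile} {T : Finset Quartile} (hmem : (top, T) ∈ idx Ps j)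
    {lam : ℝ} (hlam : 0 < lam) :
    (∑ P ∈ T, ‖a P‖^2)
      ≤ lam^2 * top.len
        + 4 * (size Ps j a)^2 * ((sSup (wSet Ps j a) * top.len) / lam) := by
  obtain ⟨hsub, i, hi, hij, htree⟩ := hmem
  set S := size Ps j a with hS
  set W := sSup (wSet Ps j a) with hW
  set L := top.len with hL
  set K := bigK top T with hKdef
  have hk0K : top.k ≤ K := bigK_top top T
  have hK : ∀ P ∈ T, P.k ≤ K := fun P hP => bigK_mem top hP
  have hsubI : ∀ P ∈ T, P.I ⊆ D top.k top.n := by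
    intro P hP
    exact (tree_sub htree hP).1
  set N := Finset.Ico (top.n * 2^((K - top.k).toNat))
      ((top.n+1) * 2^((K - top.k).toNat)) with hN
  set E := N.filter (fun ν => lam^2 < Hsum T a K ν) with hE
  -- ancestor function and stopping time
  set anc : ℤ → ℤ → ℤ := fun mm ν => ν / 2^((K - mm).toNat) with hanc
  have anc_sub : ∀ mm, mm ≤ K → ∀ ν, D K ν ⊆ D mm (anc mm ν) := by
    intro mm hmm ν
    exact D_fdiv_subset ν hmm
  set Mset : ℤ → Finset ℤ :=
    fun ν => (Finset.Icc top.k K).filter (fun mm => lam^2 < Hsum T a mm (anc mm ν)) with hM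
  have hMne : ∀ ν ∈ E, (Mset ν).Nonempty := by
    intro ν hν
    refine ⟨K, ?_⟩
    rw [hM, Finset.mem_filter, Finset.mem_Icc]
    have hancK : anc K ν = ν := by
      rw [hanc]
      simp
    rw [hancK]
    exact ⟨⟨hk0K, le_refl K⟩, (Finset.mem_filter.mp hν).2⟩
  set mfun : ℤ → ℤ := fun ν => if h : (Mset ν).Nonempty then (Mset ν).min' h else K with hmf
  set qfun : ℤ → ℤ := fun ν => anc (mfun ν) ν with hqf
  have hm_mem : ∀ ν ∈ E, mfun ν ∈ Mset ν := by
    intro ν hν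
    rw [hmf]
    simp only [dif_pos (hMne ν hν)]
    exact Finset.min'_mem _ _
  have hm_range : ∀ ν ∈ E, top.k ≤ mfun ν ∧ mfun ν ≤ K := by
    intro ν hν
    have := hm_mem ν hν
    rw [hM, Finset.mem_filter, Finset.mem_Icc] at this
    exact this.1
  have hm_big : ∀ ν ∈ E, lam^2 < Hsum T a (mfun ν) (qfun ν) := by
    intro ν hν
    have := hm_mem ν hν
    rw [hM, Finset.mem_filter] at this
    exact this.2
  have hm_min : ∀ ν ∈ E, ∀ mm ∈ Mset ν, mfun ν ≤ mm := by
    intro ν hν mm hmm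
    rw [hmf]
    simp only [dif_pos (hMne ν hν)]
    exact Finset.min'_le _ _ hmm
  have hDKsub : ∀ ν ∈ E, D K ν ⊆ D (mfun ν) (qfun ν) := by
    intro ν hν
    exact anc_sub _ (hm_range ν hν).2 ν
  have hDtop : ∀ ν ∈ E, D K ν ⊆ D top.k top.n := by
    intro ν hν
    have hνN : ν ∈ N := Finset.mem_of_mem_filter _ hν
    rw [hN, Finset.mem_Ico] at hνN
    exact (D_sub_iff hk0K).mpr hνN
  -- step D : per-ν bound
  set Gfun : ℤ → ℝ := fun ν =>
    ∑ P ∈ T.filter (fun P => D K ν ⊆ P.I ∧ P.I ⊆ D (mfun ν) (qfun ν)), ‖a P‖^2 / P.len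
    with hG
  have hGnn : ∀ ν, 0 ≤ Gfun ν := by
    intro ν
    apply Finset.sum_nonneg
    intro P _
    exact div_nonneg (by positivity) (len_pos P).le
  have hD : ∀ ν ∈ E, Hsum T a K ν ≤ lam^2 + Gfun ν := by
    intro ν hν
    have hsplit := Finset.sum_filter_add_sum_filter_not
      (T.filter (fun P => D K ν ⊆ P.I)) (fun P => P.I ⊆ D (mfun ν) (qfun ν))
      (fun P => ‖a P‖^2 / P.len)
    have hfirst : ∑ P ∈ (T.filter (fun P => D K ν ⊆ P.I)).filter
        (fun P => P.I ⊆ D (mfun ν) (qfun ν)), ‖a P‖^2 / P.len = Gfun ν := by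
      rw [hG, Finset.filter_filter]
    have hsecond : ∑ P ∈ (T.filter (fun P => D K ν ⊆ P.I)).filter
        (fun P => ¬(P.I ⊆ D (mfun ν) (qfun ν))), ‖a P‖^2 / P.len ≤ lam^2 := by
      by_cases hc : top.k ≤ mfun ν - 1
      · -- compare with parent scale
        have hm'K : mfun ν - 1 ≤ K := by have := (hm_range ν hν).2; omega
        have hsub2 : (T.filter (fun P => D K ν ⊆ P.I)).filter
            (fun P => ¬(P.I ⊆ D (mfun ν) (qfun ν)))
            ⊆ T.filter (fun P => D (mfun ν - 1) (anc (mfun ν - 1) ν) ⊆ P.I) := by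
          intro P hP
          rw [Finset.mem_filter, Finset.mem_filter] at hP
          obtain ⟨⟨hPT, hPc1⟩, hPc2⟩ := hP
          rw [Finset.mem_filter]
          refine ⟨hPT, ?_⟩
          have hPk' : P.k ≤ mfun ν - 1 := by
            by_contra hcon
            push_neg at hcon
            apply hPc2
            rw [QI_eq]
            apply D_subset_of (show mfun ν ≤ P.k by omega)
            obtain ⟨x, hx⟩ := D_nonempty K ν
            exact ⟨x, by rw [← QI_eq]; exact hPc1 hx, hDKsub ν hν hx⟩
          rw [QI_eq]
          apply D_subset_of hPk'
          obtain ⟨x, hx⟩ := D_nonempty K ν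
          exact ⟨x, anc_sub _ hm'K ν hx, by rw [← QI_eq]; exact hPc1 hx⟩
        have hsmall : Hsum T a (mfun ν - 1) (anc (mfun ν - 1) ν) ≤ lam^2 := by
          by_contra hcon
          push_neg at hcon
          have : mfun ν - 1 ∈ Mset ν := by
            rw [hM, Finset.mem_filter, Finset.mem_Icc]
            exact ⟨⟨hc, hm'K⟩, hcon⟩
          have := hm_min ν hν _ this
          omega
        calc _ ≤ ∑ P ∈ T.filter (fun P => D (mfun ν - 1) (anc (mfun ν - 1) ν) ⊆ P.I),
              ‖a P‖^2 / P.len := by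
              apply Finset.sum_le_sum_of_subset_of_nonneg hsub2
              intro P _ _
              exact div_nonneg (by positivity) (len_pos P).le
          _ ≤ lam^2 := hsmall
      · -- mfun ν = top.k : the bad set is empty
        have hmeq : mfun ν = top.k := by have := (hm_range ν hν).1; omega
        have hqeq : qfun ν = top.n := by
          apply D_eq_of_inter (m := top.k)
          obtain ⟨x, hx⟩ := D_nonempty K ν
          have h1 : x ∈ D top.k (qfun ν) := by
            have := hDKsub ν hν hx
            rwa [hmeq] at this
          exact ⟨x, h1, hDtop ν hν hx⟩
        have hempty : (T.filter (fun P => D K ν ⊆ P.I)).filter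
            (fun P => ¬(P.I ⊆ D (mfun ν) (qfun ν))) = ∅ := by
          rw [Finset.filter_eq_empty_iff]
          intro P hP
          rw [not_not, hmeq, hqeq]
          exact hsubI P (Finset.mem_of_mem_filter _ hP)
        rw [hempty, Finset.sum_empty]
        positivity
    calc Hsum T a K ν
        = ∑ P ∈ (T.filter (fun P => D K ν ⊆ P.I)).filter
            (fun P => P.I ⊆ D (mfun ν) (qfun ν)), ‖a P‖^2 / P.len
          + ∑ P ∈ (T.filter (fun P => D K ν ⊆ P.I)).filter
            (fun P => ¬(P.I ⊆ D (mfun ν) (qfun ν))), ‖a P‖^2 / P.len := by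
          rw [hsplit]; rfl
      _ ≤ Gfun ν + lam^2 := by
          rw [hfirst]
          exact add_le_add le_rfl hsecond
      _ = lam^2 + Gfun ν := by ring
  -- fibers
  set J := E.image (fun ν => (mfun ν, qfun ν)) with hJ
  -- step G : group the G-sums over fibers
  have hGsum : ∑ ν ∈ E, (2:ℝ)^(-K) * Gfun ν
      ≤ ∑ p ∈ J, (S^2 * (4 * (2:ℝ)^(-(p.1)))) := by
    have hfib := Finset.sum_fiberwise_of_maps_to (s := E) (t := J)
      (g := fun ν => (mfun ν, qfun ν))
      (fun ν hν => Finset.mem_image_of_mem (fun ν => (mfun ν, qfun ν)) hν)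
      (fun ν => (2:ℝ)^(-K) * Gfun ν)
    rw [← hfib]
    apply Finset.sum_le_sum
    intro p hp
    obtain ⟨ν₀, hν₀, hpν₀⟩ := Finset.mem_image.mp hp
    have hm0 : top.k ≤ p.1 ∧ p.1 ≤ K := by
      rw [← hpν₀]; exact hm_range ν₀ hν₀
    -- fiber sum ≤ full-scale-interval sum of subtree Hsum
    set T2 := T.filter (fun P => P.I ⊆ D p.1 p.2) with hT2
    have hpoint : ∀ ν ∈ E.filter (fun ν => (mfun ν, qfun ν) = p),
        Gfun ν = Hsum T2 a K ν := by
      intro ν hν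
      rw [Finset.mem_filter] at hν
      have hm1 : mfun ν = p.1 := by rw [← hν.2]
      have hq1 : qfun ν = p.2 := by rw [← hν.2]
      rw [hG, Hsum, hT2, Finset.filter_filter]
      apply Finset.sum_congr
      · apply Finset.filter_congr
        intro P _
        rw [hm1, hq1]
        exact ⟨fun h => ⟨h.2, h.1⟩, fun h => ⟨h.2, h.1⟩⟩
      · intros; rfl
    have hfibsub : E.filter (fun ν => (mfun ν, qfun ν) = p)
        ⊆ Finset.Ico (p.2 * 2^((K - p.1).toNat)) ((p.2+1) * 2^((K - p.1).toNat)) := by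
      intro ν hν
      rw [Finset.mem_filter] at hν
      have hm1 : mfun ν = p.1 := by rw [← hν.2]
      have hq1 : qfun ν = p.2 := by rw [← hν.2]
      have hDD : D K ν ⊆ D p.1 p.2 := by
        rw [← hm1, ← hq1]
        exact hDKsub ν hν.1
      rw [Finset.mem_Ico]
      exact (D_sub_iff hm0.2).mp hDD
    have hstep : ∑ ν ∈ E.filter (fun ν => (mfun ν, qfun ν) = p), (2:ℝ)^(-K) * Gfun ν
        ≤ ∑ ν ∈ Finset.Ico (p.2 * 2^((K - p.1).toNat)) ((p.2+1) * 2^((K - p.1).toNat)),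
            (2:ℝ)^(-K) * Hsum T2 a K ν := by
      calc ∑ ν ∈ E.filter (fun ν => (mfun ν, qfun ν) = p), (2:ℝ)^(-K) * Gfun ν
          = ∑ ν ∈ E.filter (fun ν => (mfun ν, qfun ν) = p), (2:ℝ)^(-K) * Hsum T2 a K ν :=
            Finset.sum_congr rfl (fun ν hν => by rw [hpoint ν hν])
        _ ≤ _ := by
            apply Finset.sum_le_sum_of_subset_of_nonneg hfibsub
            intro ν _ _
            exact mul_nonneg (two_zpow_pos _).le (Hsum_nonneg _ _ _ _)
    have hsum2 : ∑ ν ∈ Finset.Ico (p.2 * 2^((K - p.1).toNat)) ((p.2+1) * 2^((K - p.1).toNat)),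
        (2:ℝ)^(-K) * Hsum T2 a K ν = ∑ P ∈ T2, ‖a P‖^2 := by
      apply sum_scaleK_eq hm0.2
      · intro P hP
        exact hK P (Finset.mem_of_mem_filter _ hP)
      · intro P hP
        exact (Finset.mem_filter.mp hP).2
    have hsb : ∑ P ∈ T2, ‖a P‖^2 ≤ S^2 * (4 * (2:ℝ)^(-(p.1))) := by
      rw [hT2, hS]
      exact subtree_bound hsub hi hij htree p.1 p.2
    calc ∑ ν ∈ E.filter (fun ν => (mfun ν, qfun ν) = p), (2:ℝ)^(-K) * Gfun ν
        ≤ ∑ P ∈ T2, ‖a P‖^2 := by rw [← hsum2]; exact hstep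
      _ ≤ S^2 * (4 * (2:ℝ)^(-(p.1))) := hsb
  -- step I : measure of the stopping region
  have hJvol : lam * (∑ p ∈ J, (2:ℝ)^(-(p.1))) ≤ W * L := by
    have hdisJ : (↑J : Set (ℤ × ℤ)).PairwiseDisjoint (fun p => D p.1 p.2) := by
      intro p hp p' hp' hne
      rw [Finset.mem_coe, hJ, Finset.mem_image] at hp hp'
      obtain ⟨ν, hν, hpν⟩ := hp
      obtain ⟨ν', hν', hpν'⟩ := hp'
      simp only [Function.onFun]
      rw [Set.disjoint_left]
      intro x hx hx'
      apply hne
      -- both stopping intervals intersect at x : they coincide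
      have key : ∀ μ1 μ2 : ℤ, μ1 ∈ E → μ2 ∈ E → mfun μ1 ≤ mfun μ2 →
          x ∈ D (mfun μ1) (qfun μ1) → x ∈ D (mfun μ2) (qfun μ2) →
          (mfun μ1, qfun μ1) = (mfun μ2, qfun μ2) := by
        intro μ1 μ2 hμ1 hμ2 hle hx1 hx2
        have hss : D (mfun μ2) (qfun μ2) ⊆ D (mfun μ1) (qfun μ1) :=
          D_subset_of hle ⟨x, hx2, hx1⟩
        have hanc2 : anc (mfun μ1) μ2 = qfun μ1 := by
          apply D_eq_of_inter (m := mfun μ1)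
          obtain ⟨y, hy⟩ := D_nonempty K μ2
          exact ⟨y, anc_sub _ (by have := (hm_range μ2 hμ2).2; omega) μ2 hy,
            hss (hDKsub μ2 hμ2 hy)⟩
        have hmm : mfun μ1 ∈ Mset μ2 := by
          rw [hM, Finset.mem_filter, Finset.mem_Icc]
          refine ⟨⟨(hm_range μ1 hμ1).1, ?_⟩, ?_⟩
          · have := (hm_range μ2 hμ2).2; omega
          · rw [hanc2]
            exact hm_big μ1 hμ1
        have hle2 : mfun μ2 ≤ mfun μ1 := hm_min μ2 hμ2 _ hmm
        have hmeq : mfun μ1 = mfun μ2 := le_antisymm hle hle2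
        have hqeq : qfun μ1 = qfun μ2 := by
          calc qfun μ1 = anc (mfun μ1) μ2 := hanc2.symm
            _ = anc (mfun μ2) μ2 := by rw [hmeq]
            _ = qfun μ2 := rfl
        rw [hmeq, hqeq]
      subst hpν
      subst hpν'
      rcases le_total (mfun ν) (mfun ν') with hle | hle
      · exact key ν ν' hν hν' hle hx hx'
      · exact (key ν' ν hν' hν hle hx' hx).symm
    have hJsubset : ∀ p ∈ J, D p.1 p.2 ⊆ {x ∈ top.I | lam < |treeFn T a x|} := by
      intro p hp
      rw [hJ, Finset.mem_image] at hp
      obtain ⟨ν, hν, hpν⟩ := hp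
      intro x hx
      rw [← hpν] at hx
      constructor
      · have hxtop : D (mfun ν) (qfun ν) ⊆ D top.k top.n := by
          apply D_subset_of (hm_range ν hν).1
          obtain ⟨y, hy⟩ := D_nonempty K ν
          exact ⟨y, hDKsub ν hν hy, hDtop ν hν hy⟩
        rw [QI_eq]
        exact hxtop hx
      · rw [abs_of_nonneg (treeFn_nonneg T a x)]
        have h1 : Real.sqrt (Hsum T a (mfun ν) (qfun ν)) ≤ treeFn T a x := treeFn_ge hx
        have h2 : lam < Real.sqrt (Hsum T a (mfun ν) (qfun ν)) :=
          (Real.lt_sqrt hlam.le).mpr (hm_big ν hν)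
        linarith
    -- measure computations
    have hvolU : volume (⋃ p ∈ J, D p.1 p.2) = ENNReal.ofReal (∑ p ∈ J, (2:ℝ)^(-(p.1))) := by
      rw [measure_biUnion_finset hdisJ (fun p _ => measurableSet_Ico)]
      rw [ENNReal.ofReal_sum_of_nonneg (fun p _ => (two_zpow_pos _).le)]
      exact Finset.sum_congr rfl (fun p _ => vol_D p.1 p.2)
    have hUsub : (⋃ p ∈ J, D p.1 p.2) ⊆ {x ∈ top.I | lam < |treeFn T a x|} := by
      intro x hx
      rw [Set.mem_iUnion₂] at hx
      obtain ⟨p, hp, hxp⟩ := hx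
      exact hJsubset p hp hxp
    have hμfin : volume {x ∈ top.I | lam < |treeFn T a x|} ≠ ⊤ := by
      have hmono : volume {x ∈ top.I | lam < |treeFn T a x|} ≤ volume top.I :=
        measure_mono (fun x hx => hx.1)
      have : volume top.I = ENNReal.ofReal L := by
        rw [QI_eq, vol_D]; rfl
      rw [this] at hmono
      exact ne_top_of_le_ne_top ENNReal.ofReal_ne_top hmono
    have hSle : (∑ p ∈ J, (2:ℝ)^(-(p.1)))
        ≤ (volume {x ∈ top.I | lam < |treeFn T a x|}).toReal := by
      rw [← ENNReal.ofReal_le_iff_le_toReal hμfin, ← hvolU]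
      exact measure_mono hUsub
    have hwge := weakL1_ge top T a hlam
    have hwle : weakL1 (treeFn T a) top.I ≤ W * L := by
      have hmem2 : weakL1 (treeFn T a) top.I / top.len ∈ wSet Ps j a :=
        ⟨(top, T), ⟨hsub, i, hi, hij, htree⟩, rfl⟩
      have h3 : weakL1 (treeFn T a) top.I / top.len ≤ W :=
        le_csSup (wSet_bddAbove Ps j a) hmem2
      have hL0 : 0 < L := len_pos top
      calc weakL1 (treeFn T a) top.I
          = (weakL1 (treeFn T a) top.I / top.len) * L := by
            rw [hL, div_mul_cancel₀ _ (len_pos top).ne']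
        _ ≤ W * L := mul_le_mul_of_nonneg_right h3 hL0.le
    calc lam * (∑ p ∈ J, (2:ℝ)^(-(p.1)))
        ≤ lam * (volume {x ∈ top.I | lam < |treeFn T a x|}).toReal :=
          mul_le_mul_of_nonneg_left hSle hlam.le
      _ ≤ weakL1 (treeFn T a) top.I := hwge
      _ ≤ W * L := hwle
  -- final assembly
  have hA : ∑ P ∈ T, ‖a P‖^2
      = ∑ ν ∈ N, (2:ℝ)^(-K) * Hsum T a K ν := (sum_scaleK_eq hk0K hK hsubI).symm
  have hBsplit : ∑ ν ∈ N, (2:ℝ)^(-K) * Hsum T a K ν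
      = ∑ ν ∈ E, (2:ℝ)^(-K) * Hsum T a K ν
        + ∑ ν ∈ N.filter (fun ν => ¬(lam^2 < Hsum T a K ν)), (2:ℝ)^(-K) * Hsum T a K ν := by
    rw [hE]
    exact (Finset.sum_filter_add_sum_filter_not N _ _).symm
  have hC : ∑ ν ∈ N.filter (fun ν => ¬(lam^2 < Hsum T a K ν)), (2:ℝ)^(-K) * Hsum T a K ν
      ≤ ∑ ν ∈ N.filter (fun ν => ¬(lam^2 < Hsum T a K ν)), (2:ℝ)^(-K) * lam^2 := by
    apply Finset.sum_le_sum
    intro ν hν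
    rw [Finset.mem_filter, not_lt] at hν
    exact mul_le_mul_of_nonneg_left hν.2 (two_zpow_pos _).le
  have hEsum : ∑ ν ∈ E, (2:ℝ)^(-K) * Hsum T a K ν
      ≤ ∑ ν ∈ E, (2:ℝ)^(-K) * lam^2 + ∑ ν ∈ E, (2:ℝ)^(-K) * Gfun ν := by
    rw [← Finset.sum_add_distrib]
    apply Finset.sum_le_sum
    intro ν hν
    have := hD ν hν
    have h2K := two_zpow_pos (-K)
    nlinarith
  have hcount : ∑ ν ∈ E, (2:ℝ)^(-K) * lam^2
      + ∑ ν ∈ N.filter (fun ν => ¬(lam^2 < Hsum T a K ν)), (2:ℝ)^(-K) * lam^2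
      = lam^2 * L := by
    rw [Finset.sum_const, Finset.sum_const, nsmul_eq_mul, nsmul_eq_mul]
    have hcard : (E.card : ℝ) + ((N.filter (fun ν => ¬(lam^2 < Hsum T a K ν))).card : ℝ)
        = (N.card : ℝ) := by
      rw [hE]
      rw [← Nat.cast_add]
      congr 1
      exact Finset.card_filter_add_card_filter_not _
    have hNc : (2:ℝ)^(-K) * (N.card : ℝ) = L := count_mul top K hk0K
    calc (E.card:ℝ) * ((2:ℝ)^(-K)*lam^2)
          + ((N.filter (fun ν => ¬(lam^2 < Hsum T a K ν))).card : ℝ) * ((2:ℝ)^(-K)*lam^2)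
        = ((E.card:ℝ) + ((N.filter (fun ν => ¬(lam^2 < Hsum T a K ν))).card : ℝ))
            * ((2:ℝ)^(-K)*lam^2) := by ring
      _ = (N.card:ℝ) * ((2:ℝ)^(-K)*lam^2) := by rw [hcard]
      _ = lam^2 * ((2:ℝ)^(-K) * (N.card:ℝ)) := by ring
      _ = lam^2 * L := by rw [hNc]
  have hWnn : 0 ≤ W := wSet_nonneg Ps j a
  have hLnn : 0 < L := len_pos top
  have hJle : ∑ p ∈ J, (2:ℝ)^(-(p.1)) ≤ W * L / lam := by
    rw [le_div_iff₀ hlam]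
    calc (∑ p ∈ J, (2:ℝ)^(-(p.1))) * lam = lam * (∑ p ∈ J, (2:ℝ)^(-(p.1))) := by ring
      _ ≤ W * L := hJvol
  have hSnn : 0 ≤ S := size_nonneg Ps j a
  calc ∑ P ∈ T, ‖a P‖^2
      = ∑ ν ∈ E, (2:ℝ)^(-K) * Hsum T a K ν
        + ∑ ν ∈ N.filter (fun ν => ¬(lam^2 < Hsum T a K ν)), (2:ℝ)^(-K) * Hsum T a K ν := by
        rw [hA, hBsplit]
    _ ≤ (∑ ν ∈ E, (2:ℝ)^(-K) * lam^2 + ∑ ν ∈ E, (2:ℝ)^(-K) * Gfun ν)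
        + ∑ ν ∈ N.filter (fun ν => ¬(lam^2 < Hsum T a K ν)), (2:ℝ)^(-K) * lam^2 :=
        add_le_add hEsum hC
    _ = lam^2 * L + ∑ ν ∈ E, (2:ℝ)^(-K) * Gfun ν := by
        rw [← hcount]; ring
    _ ≤ lam^2 * L + ∑ p ∈ J, (S^2 * (4 * (2:ℝ)^(-(p.1)))) := by
        linarith [hGsum]
    _ = lam^2 * L + 4 * S^2 * (∑ p ∈ J, (2:ℝ)^(-(p.1))) := by
        rw [Finset.mul_sum]
        congr 1
        apply Finset.sum_congr rfl
        intro p _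
        ring
    _ ≤ lam^2 * L + 4 * S^2 * (W * L / lam) := by
        have h4S : 0 ≤ 4 * S^2 := by positivity
        nlinarith [hJle]


end JNaux


namespace JNaux

lemma size_le_12W (Ps : Finset Quartile) (j : ℕ) (a : Quartile → ℂ) :
    size Ps j a ≤ 12 * sSup (wSet Ps j a) := by
  set S := size Ps j a with hSdef
  set W := sSup (wSet Ps j a) with hWdef
  have hSnn : 0 ≤ S := size_nonneg Ps j a
  have hWnn : 0 ≤ W := wSet_nonneg Ps j a
  have hkey : ∀ e ∈ sizeSet Ps j a, ∀ lam : ℝ, 0 < lam →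
      e^2 ≤ lam^2 + 4*S^2*W/lam := by
    rintro e ⟨⟨top, T⟩, hmem, rfl⟩ lam hlam
    dsimp only
    have hL0 : 0 < top.len := len_pos top
    have hA0 : 0 ≤ ∑ P ∈ T, ‖a P‖^2 := Finset.sum_nonneg fun P _ => by positivity
    have h := key_estimate (a := a) hmem hlam
    rw [Real.sq_sqrt (by positivity)]
    rw [div_le_iff₀ hL0]
    have hiden : lam^2 * top.len + 4 * S^2 * ((W * top.len) / lam)
        = (lam^2 + 4*S^2*W/lam) * top.len := by
      field_simp
    rw [← hiden]
    exact h
  have he0 : ∀ e ∈ sizeSet Ps j a, 0 ≤ e := by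
    rintro e ⟨p, _, rfl⟩
    exact Real.sqrt_nonneg _
  by_cases hW : 0 < W
  · have hS2 : S^2 ≤ 64*W^2 + S^2/2 := by
      have hb : S ≤ Real.sqrt (64*W^2 + S^2/2) := by
        rw [hSdef, size_eq_sSup]
        apply Real.sSup_le _ (Real.sqrt_nonneg _)
        intro e he
        have h := hkey e he (8*W) (by positivity)
        have h48 : 4*S^2*W/(8*W) = S^2/2 := by
          field_simp
          ring
        have he2 : e^2 ≤ 64*W^2 + S^2/2 := by
          rw [h48] at h
          nlinarith [h]
        calc e = Real.sqrt (e^2) := (Real.sqrt_sq (he0 e he)).symm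
          _ ≤ Real.sqrt (64*W^2 + S^2/2) := Real.sqrt_le_sqrt he2
      have h2 := pow_le_pow_left₀ hSnn hb 2
      rwa [Real.sq_sqrt (by positivity)] at h2
    have h12 : (0:ℝ) ≤ S + 12*W := by positivity
    nlinarith [hS2, h12, mul_pos hW hW]
  · have hWeq : W = 0 := le_antisymm (not_lt.mp hW) hWnn
    have hs0 : S ≤ 0 := by
      rw [hSdef, size_eq_sSup]
      apply Real.sSup_le _ le_rfl
      intro e he
      by_contra hpos
      push_neg at hpos
      have h := hkey e he (e/2) (by linarith)
      rw [hWeq] at h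
      norm_num at h
      nlinarith [h, mul_pos hpos hpos]
    linarith

end JNaux

/-- John–Nirenberg for size: `size_j` is comparable, up to
absolute constants, to the sup over trees of
`|I_T|⁻¹ ‖(Σ_{P∈T} |a_{P_j}|² χ_{I_P}/|I_P|)^{1/2}‖_{L^{1,∞}(I_T)}`. -/
theorem size_john_nirenberg :
    ∃ C : ℝ, 0 < C ∧ ∀ (Ps : Finset Quartile) (j : ℕ), j ∈ ({1,2,3} : Set ℕ) →
      ∀ a : Quartile → ℂ,
      size Ps j a ≤ C * sSup ((fun p : Quartile × Finset Quartile =>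
          weakL1 (treeFn p.2 a) p.1.I / p.1.len) ''
        {p | p.2 ⊆ Ps ∧ ∃ i ∈ ({1,2,3} : Set ℕ), i ≠ j ∧ IsTree i p.1 p.2}) ∧
      sSup ((fun p : Quartile × Finset Quartile =>
          weakL1 (treeFn p.2 a) p.1.I / p.1.len) ''
        {p | p.2 ⊆ Ps ∧ ∃ i ∈ ({1,2,3} : Set ℕ), i ≠ j ∧ IsTree i p.1 p.2}) ≤
        C * size Ps j a := by
  refine ⟨12, by norm_num, ?_⟩
  intro Ps j _ a
  constructor
  · exact JNaux.size_le_12W Ps j a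
  · show sSup (JNaux.wSet Ps j a) ≤ 12 * size Ps j a
    have h1 := JNaux.wSet_sSup_le_size Ps j a
    have h2 := JNaux.size_nonneg Ps j a
    linarith
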